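/- A finite word w is rich if and only if every complete return to any nonempty palindromic factor of w is itself a palindrome, where a complete return to u in w is a factor of w containing exactly two occurrences of u, one as a prefix and one as a suffix. -/

import Mathlib

/-- A word is a palindrome if it equals its reversal. -/
def Palindromic {α : Type*} (w : List α) : Prop := w.reverse = w

/-- A finite word is rich if it has exactly |w|+1 distinct palindromic factors
(including the empty word). -/
def Rich {α : Type*} (w : List α) : Prop :=
  {p : List α | p <:+: w ∧ Palindromic p}.ncard = w.length + 1

/-- A word is square-free if it has no factor of the form `u ++ u` with `u` nonempty. -/
def SqFree {α : Type*} (w : List α) : Prop :=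
  ∀ u : List α, u ≠ [] → ¬ (u ++ u) <:+: w

/-- `r` is a complete return to `u`: it has `u` as a prefix and as a suffix,
and exactly two occurrences of `u` altogether. -/
def CompleteReturn {α : Type*} (u r : List α) : Prop :=
  u <+: r ∧ u <:+ r ∧ {s : List α | ∃ t, r = s ++ u ++ t}.ncard = 2


/-!
Adding a letter to a word creates at most one new palindromic factor, namely the longest
palindromic suffix of the extended word, and only if that suffix did not occur before. Hence a word
is rich exactly when the longest palindromic suffix of each of its prefixes is unioccurrent in that
prefix. If a complete return `r` to a palindrome `u` were not a palindrome, its longest palindromic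
suffix `q` would either be `u` itself, which then also occurs as a prefix of `r`, or would start
with a third occurrence of `u` strictly inside `r`. Conversely, if the longest palindromic suffix
`q` of a prefix occurs earlier, the suffix starting at the last earlier occurrence of `q` is a
complete return to `q`, hence a palindromic suffix longer than `q`.
-/

open List

section

variable {α : Type*}

def palFactors (w : List α) : Set (List α) := {p | p <:+: w ∧ Palindromic p}

theorem rich_iff_ncard_palFactors {w : List α} : Rich w ↔ (palFactors w).ncard = w.length + 1 :=
  Iff.rfl

theorem palFactors_finite (w : List α) : (palFactors w).Finite := by
  refine (w.tails.flatMap inits).finite_toSet.subset fun p ⟨hp, _⟩ => ?_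
  obtain ⟨t, hpt, htw⟩ := infix_iff_prefix_suffix.1 hp
  simpa only [Set.mem_ofPred_eq, mem_flatMap, mem_tails, mem_inits] using ⟨t, htw, hpt⟩

theorem palFactors_nil : palFactors ([] : List α) = {[]} := by
  ext p
  simp only [palFactors, infix_nil, Set.mem_ofPred_eq, Set.mem_singleton_iff, and_iff_left_iff_imp]
  rintro rfl
  rfl

theorem palFactors_reverse (w : List α) : palFactors w.reverse = palFactors w := by
  ext p
  refine and_congr_left fun hp => ?_
  conv_lhs => rw [← hp]
  exact reverse_infix

theorem Palindromic.prefix_of_suffix {p q : List α} (hp : Palindromic p) (hq : Palindromic q)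
    (h : q <:+ p) : q <+: p := by
  rw [← hp, ← hq]
  exact reverse_prefix.2 h

structure IsLongestPalSuffix (q w : List α) : Prop where
  suffix : q <:+ w
  palindromic : Palindromic q
  length_le : ∀ p, p <:+ w → Palindromic p → p.length ≤ q.length

theorem exists_isLongestPalSuffix (w : List α) : ∃ q, IsLongestPalSuffix q w := by
  have hfin : {p | p <:+ w ∧ Palindromic p}.Finite :=
    w.tails.finite_toSet.subset fun p hp => (mem_tails _ _).2 hp.1
  obtain ⟨q, ⟨hqw, hq⟩, hmax⟩ := Set.exists_max_image _ length hfin ⟨[], nil_suffix, rfl⟩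
  exact ⟨q, ⟨hqw, hq, fun p hpw hp => hmax p ⟨hpw, hp⟩⟩⟩

theorem IsLongestPalSuffix.ne_nil {q v : List α} {a : α}
    (hq : IsLongestPalSuffix q (v ++ [a])) : q ≠ [] := by
  rintro rfl
  simpa using hq.length_le [a] (suffix_append v [a]) rfl

theorem Palindromic.infix_of_suffix_of_lt {p q v : List α} {a : α} (hp : Palindromic p)
    (hq : Palindromic q) (hpv : p <:+ v ++ [a]) (hqv : q <:+ v ++ [a])
    (hlt : q.length < p.length) : q <:+: v := by
  have hqp : q <+: p := hp.prefix_of_suffix hq (suffix_of_suffix_length_le hqv hpv hlt.le)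
  obtain rfl | ⟨p', rfl, hp'v⟩ := suffix_concat_iff.1 hpv
  · simp at hlt
  obtain rfl | hqp' := prefix_concat_iff.1 hqp
  · exact absurd hlt (lt_irrefl _)
  · exact hqp'.isInfix.trans hp'v.isInfix

theorem palFactors_append_singleton {v q : List α} {a : α}
    (hq : IsLongestPalSuffix q (v ++ [a])) : palFactors (v ++ [a]) = insert q (palFactors v) := by
  ext p
  simp only [palFactors, Set.mem_insert_iff, Set.mem_ofPred_eq, infix_concat_iff]
  constructor
  · rintro ⟨hpv | hpv, hp⟩
    · obtain hlt | heq := (hq.length_le p hpv hp).lt_or_eq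
      · exact .inr ⟨hq.palindromic.infix_of_suffix_of_lt hp hq.suffix hpv hlt, hp⟩
      · exact .inl ((suffix_of_suffix_length_le hpv hq.suffix heq.le).eq_of_length heq)
    · exact .inr ⟨hpv, hp⟩
  · rintro (rfl | ⟨hpv, hp⟩)
    · exact ⟨.inl hq.suffix, hq.palindromic⟩
    · exact ⟨.inr hpv, hp⟩

theorem ncard_palFactors_le (w : List α) : (palFactors w).ncard ≤ w.length + 1 := by
  induction w using reverseRecOn with
  | nil => simp [palFactors_nil]
  | append_singleton v a ih =>
    obtain ⟨q, hq⟩ := exists_isLongestPalSuffix (v ++ [a])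
    rw [palFactors_append_singleton hq, length_append, length_singleton]
    exact (Set.ncard_insert_le q _).trans (by omega)

theorem rich_append_singleton_iff {v q : List α} {a : α}
    (hq : IsLongestPalSuffix q (v ++ [a])) : Rich (v ++ [a]) ↔ Rich v ∧ ¬ q <:+: v := by
  have hle := ncard_palFactors_le v
  rw [rich_iff_ncard_palFactors, rich_iff_ncard_palFactors, palFactors_append_singleton hq,
    length_append, length_singleton]
  by_cases hqv : q <:+: v
  · rw [Set.insert_eq_of_mem (show q ∈ palFactors v from ⟨hqv, hq.palindromic⟩)]
    simp only [hqv, not_true_eq_false, and_false, iff_false]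
    omega
  · rw [Set.ncard_insert_of_notMem (fun h => hqv h.1) (palFactors_finite v)]
    simp [hqv]

theorem Rich.of_prefix {v w : List α} (hw : Rich w) (h : v <+: w) : Rich v := by
  obtain ⟨t, rfl⟩ := h
  induction t using reverseRecOn with
  | nil => simpa using hw
  | append_singleton t a ih =>
    obtain ⟨q, hq⟩ := exists_isLongestPalSuffix (v ++ t ++ [a])
    rw [← append_assoc] at hw
    exact ih ((rich_append_singleton_iff hq).1 hw).1

theorem Rich.reverse {w : List α} (hw : Rich w) : Rich w.reverse := by
  rwa [rich_iff_ncard_palFactors, palFactors_reverse, length_reverse]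

theorem Rich.of_suffix {v w : List α} (hw : Rich w) (h : v <:+ w) : Rich v := by
  simpa using (hw.reverse.of_prefix (reverse_prefix.2 h)).reverse

theorem Rich.of_infix {v w : List α} (hw : Rich w) (h : v <:+: w) : Rich v := by
  obtain ⟨t, hvt, htw⟩ := infix_iff_prefix_suffix.1 h
  exact (hw.of_suffix htw).of_prefix hvt

def occurrences (u r : List α) : Set (List α) := {s | ∃ t, r = s ++ u ++ t}

theorem occurrences_finite (u r : List α) : (occurrences u r).Finite :=
  r.inits.finite_toSet.subset <| by
    rintro s ⟨t, rfl⟩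
    simp [append_assoc]

theorem Rich.palindromic_of_completeReturn {u r : List α} (hr : Rich r) (hu : Palindromic u)
    (hret : CompleteReturn u r) : Palindromic r := by
  obtain ⟨⟨t₀, ht₀⟩, hur, hcard⟩ := hret
  obtain ⟨q, hq⟩ := exists_isLongestPalSuffix r
  obtain hqr | hqr := hq.suffix.length_le.lt_or_eq
  swap
  · exact hq.suffix.eq_of_length hqr ▸ hq.palindromic
  exfalso
  have huq : u <:+ q := suffix_of_suffix_length_le hur hq.suffix (hq.length_le u hur hu)
  obtain hlt | heq := huq.length_le.lt_or_eq
  · -- `u` occurs in `r` at `0`, at `|r| - |q|` (as a prefix of `q`) and at `|r| - |u|`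
    obtain ⟨s, hs⟩ := hq.suffix
    obtain ⟨t₁, ht₁⟩ := hq.palindromic.prefix_of_suffix hu huq
    obtain ⟨s₂, hs₂⟩ := hur
    have hls := congrArg length hs
    have hls₂ := congrArg length hs₂
    simp only [length_append] at hls hls₂
    have : 2 < (occurrences u r).ncard := by
      rw [Set.two_lt_ncard_iff (occurrences_finite u r)]
      refine ⟨[], s, s₂, ⟨t₀, by simp [ht₀]⟩, ⟨t₁, by rw [← hs, ← ht₁, append_assoc]⟩,
        ⟨[], by simp [hs₂]⟩, ?_, ?_, ?_⟩ <;>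
      exact ne_of_apply_ne length (by simp only [length_nil, ne_eq]; omega)
    exact this.ne' hcard
  · obtain ⟨v, a, rfl⟩ := r.eq_nil_or_concat'.resolve_left (ne_nil_of_length_pos (by omega))
    have hqv : q <+: v := by
      refine (prefix_concat_iff.1 ⟨t₀, huq.eq_of_length heq ▸ ht₀⟩).resolve_left fun h => ?_
      rw [h] at hqr
      exact lt_irrefl _ hqr
    exact ((rich_append_singleton_iff hq).1 hr).2 hqv.isInfix

theorem exists_completeReturn_suffix {u v : List α} {a : α} (hu : u <:+ v ++ [a])
    (huv : u <:+: v) : ∃ r, r <:+ v ++ [a] ∧ u.length < r.length ∧ CompleteReturn u r := by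
  have hfin : {r | r <:+ v ++ [a] ∧ u <+: r ∧ u.length < r.length}.Finite :=
    (v ++ [a]).tails.finite_toSet.subset fun r hr => (mem_tails _ _).2 hr.1
  have hne : {r | r <:+ v ++ [a] ∧ u <+: r ∧ u.length < r.length}.Nonempty := by
    obtain ⟨s, t, rfl⟩ := huv
    exact ⟨u ++ (t ++ [a]), ⟨s, by simp⟩, prefix_append _ _, by simp⟩
  obtain ⟨r, ⟨hrv, hur, hlt⟩, hmin⟩ := Set.exists_min_image _ length hfin hne
  obtain ⟨s₂, hs₂⟩ := suffix_of_suffix_length_le hu hrv hlt.le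
  have hocc : occurrences u r = {[], s₂} := by
    ext x
    constructor
    · rintro ⟨t, rfl⟩
      obtain rfl | ht := eq_or_ne t []
      · exact .inr (append_cancel_right (hs₂.trans (append_nil _))).symm
      · refine .inl (eq_nil_of_length_eq_zero ?_)
        have := hmin (u ++ t) ⟨(suffix_append x (u ++ t)).trans (by simpa using hrv),
          prefix_append _ _, by simpa using length_pos_iff.2 ht⟩
        simp only [length_append] at this
        omega
    · rintro (rfl | rfl)
      · obtain ⟨t, rfl⟩ := hur
        exact ⟨t, by simp⟩
      · exact ⟨[], by simp [hs₂]⟩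
  have hs₂ne : [] ≠ s₂ := ne_of_apply_ne length (by
    have := congrArg length hs₂
    simp only [length_append] at this
    simp only [length_nil, ne_eq]
    omega)
  exact ⟨r, hrv, hlt, hur, ⟨s₂, hs₂⟩, (congrArg Set.ncard hocc).trans (Set.ncard_pair hs₂ne)⟩

theorem rich_of_forall_completeReturn_palindromic {w : List α}
    (H : ∀ u r : List α, u ≠ [] → Palindromic u → u <:+: w → r <:+: w → CompleteReturn u r →
      Palindromic r) : Rich w := by
  induction w using reverseRecOn with
  | nil => simp [rich_iff_ncard_palFactors, palFactors_nil]
  | append_singleton v a ih =>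
    have hv : v <:+: v ++ [a] := (prefix_append v [a]).isInfix
    obtain ⟨q, hq⟩ := exists_isLongestPalSuffix (v ++ [a])
    refine (rich_append_singleton_iff hq).2 ⟨ih fun u r hu hpu huv hrv =>
      H u r hu hpu (huv.trans hv) (hrv.trans hv), fun hqv => ?_⟩
    obtain ⟨r, hrv, hlt, hret⟩ := exists_completeReturn_suffix hq.suffix hqv
    have hr := H q r hq.ne_nil hq.palindromic hq.suffix.isInfix hrv.isInfix hret
    exact (hq.length_le r hrv hr).not_gt hlt

end

theorem rich_iff_complete_returns_palindromic {α : Type*} (w : List α) :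
    Rich w ↔ ∀ u r : List α, u ≠ [] → Palindromic u → u <:+: w →
      r <:+: w → CompleteReturn u r → Palindromic r :=
  ⟨fun hw _ _ _ hu _ hr hret => (hw.of_infix hr).palindromic_of_completeReturn hu hret,
    rich_of_forall_completeReturn_palindromic⟩
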